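/- Let L = ⊕_{n∈ℤ} V_n be the graded Lie algebra associated with a standard pentad, and let α_i : V_i → V_i for i = 0, ±1 be linear maps satisfying α_{i+j}([a_i, b_j]) = [α_i(a_i), b_j] + [a_i, α_j(b_j)] for all -1 ≤ i, j, i+j ≤ 1 and a_i ∈ V_i, b_j ∈ V_j. Then there exists a derivation α of L whose restriction to V_i equals α_i for i = 0, ±1. -/

import Mathlib

/-!
The derivation is built degree by degree. Write `δ(a, b) = β⁅a, b⁆ - ⁅β a, b⁆ - ⁅a, β b⁆` for the
Leibniz defect of a linear map `β`; the Jacobi identity makes it a cocycle. Suppose `δ` vanishes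
on `Vᵢ × Vⱼ` whenever `|i| ≤ 1` and `|j|, |i + j| ≤ N`. For `|n| = N + 1 ≥ 2` an element `z ∈ Vₙ`
is determined by its brackets with `V_{∓1}`, and the prescription
`⁅β z, y⁆ = β⁅z, y⁆ - ⁅z, β y⁆` is realised on the generators `⁅u, x⁆` of `Vₙ` by
`⁅β u, x⁆ + ⁅u, β x⁆` thanks to the cocycle identity; this defines `β` on `Vₙ`, and the same
identity together with transitivity gives all Leibniz rules up to degree `N + 1`. Transitivity
also shows that the maps obtained at different stages agree, so they glue to a linear map `α`
whose defect vanishes as soon as one argument has degree `0` or `±1`. The kernel of the defect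
is a Lie subalgebra, hence all of `L`, which is generated by `V₋₁ ⊕ V₀ ⊕ V₁`.
-/

/-- A **standard pentad** `(g, ρ, V, 𝒱, B₀)` in the abstract-dual formulation: a Lie algebra
`g` with a non-degenerate invariant bilinear form `B`, representations `ρ` on `V` and `ϱ`
on `W` (with `W` playing the role of the `g`-submodule `𝒱 ⊆ Hom(V, k)`, realized via the
non-degenerate pairing `pair`, so that `ϱ` is the canonical dual action), together with a
Φ-map `Φ`. -/
structure PentadStruct (k g V W : Type*) [Field k] [LieRing g] [LieAlgebra k g]
    [AddCommGroup V] [Module k V] [AddCommGroup W] [Module k W] where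
  ρ : g →ₗ[k] V →ₗ[k] V
  rep_ρ : ∀ a b : g, ρ ⁅a, b⁆ = ρ a ∘ₗ ρ b - ρ b ∘ₗ ρ a
  ϱ : g →ₗ[k] W →ₗ[k] W
  rep_ϱ : ∀ a b : g, ϱ ⁅a, b⁆ = ϱ a ∘ₗ ϱ b - ϱ b ∘ₗ ϱ a
  pair : V →ₗ[k] W →ₗ[k] k
  pair_compat : ∀ (a : g) (v : V) (w : W), pair (ρ a v) w = - pair v (ϱ a w)
  pair_nondeg_left : ∀ v : V, (∀ w : W, pair v w = 0) → v = 0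
  pair_nondeg_right : ∀ w : W, (∀ v : V, pair v w = 0) → w = 0
  B : g →ₗ[k] g →ₗ[k] k
  B_nondeg_left : ∀ a : g, (∀ b : g, B a b = 0) → a = 0
  B_nondeg_right : ∀ b : g, (∀ a : g, B a b = 0) → b = 0
  B_invariant : ∀ a b c : g, B ⁅a, b⁆ c = B a ⁅b, c⁆
  Φ : V →ₗ[k] W →ₗ[k] g
  Φ_compat : ∀ (a : g) (v : V) (w : W), B a (Φ v w) = pair (ρ a v) w

/-- The graded Lie algebra `L(g, ρ, V, 𝒱, B₀) = ⊕ₙ Vₙ` associated with a standard pentad,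
characterized by its defining properties: it is ℤ-graded, its degrees `0`, `1`, `-1` are the
images of `g`, `V`, `𝒱` (compatibly with the Lie structures and the Φ-map), the higher graded
pieces satisfy `V_{i+1} = [V₁, V_i]`, `V_{-i-1} = [V₋₁, V₋ᵢ]` for `i ≥ 1`, and elements of
`Vₙ`, `|n| ≥ 2`, are by construction (as homomorphisms) determined by their brackets with
`V_{∓1}`. -/
structure AssocGradedLieAlgebra (k g V W : Type*) [Field k] [LieRing g] [LieAlgebra k g]
    [AddCommGroup V] [Module k V] [AddCommGroup W] [Module k W]
    (P : PentadStruct k g V W) (L : Type*) [LieRing L] [LieAlgebra k L] where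
  grading : ℤ → Submodule k L
  isInternal : DirectSum.IsInternal grading
  lie_mem : ∀ (n m : ℤ), ∀ x ∈ grading n, ∀ y ∈ grading m, ⁅x, y⁆ ∈ grading (n + m)
  ιg : g →ₗ[k] L
  ιV : V →ₗ[k] L
  ιW : W →ₗ[k] L
  ιg_inj : Function.Injective ιg
  ιV_inj : Function.Injective ιV
  ιW_inj : Function.Injective ιW
  ιg_range : LinearMap.range ιg = grading 0
  ιV_range : LinearMap.range ιV = grading 1
  ιW_range : LinearMap.range ιW = grading (-1)
  ιg_lie : ∀ a b : g, ιg ⁅a, b⁆ = ⁅ιg a, ιg b⁆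
  lie_ιV : ∀ (a : g) (v : V), ⁅ιg a, ιV v⁆ = ιV (P.ρ a v)
  lie_ιW : ∀ (a : g) (w : W), ⁅ιg a, ιW w⁆ = ιW (P.ϱ a w)
  lie_Φ : ∀ (v : V) (w : W), ⁅ιV v, ιW w⁆ = ιg (P.Φ v w)
  span_pos : ∀ i : ℤ, 1 ≤ i → grading (i + 1)
    = Submodule.span k {z : L | ∃ x ∈ grading 1, ∃ y ∈ grading i, z = ⁅x, y⁆}
  span_neg : ∀ i : ℤ, 1 ≤ i → grading (-i - 1)
    = Submodule.span k {z : L | ∃ x ∈ grading (-1), ∃ y ∈ grading (-i), z = ⁅x, y⁆}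
  trans_pos : ∀ n : ℤ, 2 ≤ n → ∀ x ∈ grading n, (∀ y ∈ grading (-1), ⁅x, y⁆ = 0) → x = 0
  trans_neg : ∀ n : ℤ, 2 ≤ n → ∀ x ∈ grading (-n), (∀ y ∈ grading 1, ⁅x, y⁆ = 0) → x = 0

namespace DirectSum.IsInternal

variable {R M N ι : Type*} [Semiring R] [AddCommMonoid M] [Module R M] [AddCommMonoid N]
  [Module R N] [DecidableEq ι] {𝓜 : ι → Submodule R M}

theorem exists_comp_subtype_eq (h : IsInternal 𝓜) (f : ∀ i, 𝓜 i →ₗ[R] N) :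
    ∃ F : M →ₗ[R] N, ∀ i, F ∘ₗ (𝓜 i).subtype = f i := by
  refine ⟨toModule R ι N f ∘ₗ (LinearEquiv.ofBijective (coeLinearMap 𝓜) h).symm.toLinearMap,
    fun i => LinearMap.ext fun x => ?_⟩
  have hx : (LinearEquiv.ofBijective (coeLinearMap 𝓜) h).symm x = lof R ι (fun i => 𝓜 i) i x := by
    rw [LinearEquiv.symm_apply_eq]
    exact (coeLinearMap_lof 𝓜 i x).symm
  simp [hx]

theorem exists_update (h : IsInternal 𝓜) (β : M →ₗ[R] N) (m : ι) (γ : 𝓜 m →ₗ[R] N) :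
    ∃ β' : M →ₗ[R] N, (∀ x : 𝓜 m, β' x = γ x) ∧ ∀ n ≠ m, ∀ x ∈ 𝓜 n, β' x = β x := by
  obtain ⟨β', hβ'⟩ := h.exists_comp_subtype_eq fun n =>
    if hn : n = m then hn ▸ γ else β ∘ₗ (𝓜 n).subtype
  refine ⟨β', fun x => ?_, fun n hn x hx => ?_⟩
  · simpa using LinearMap.congr_fun (hβ' m) x
  · simpa [hn] using LinearMap.congr_fun (hβ' n) ⟨x, hx⟩

end DirectSum.IsInternal

theorem Int.sign_cases (n : ℤ) :
    0 < n ∧ n.sign = 1 ∨ n = 0 ∧ n.sign = 0 ∨ n < 0 ∧ n.sign = -1 := by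
  rcases lt_trichotomy n 0 with h | rfl | h
  · exact .inr (.inr ⟨h, Int.sign_eq_neg_one_of_neg h⟩)
  · exact .inr (.inl ⟨rfl, rfl⟩)
  · exact .inl ⟨h, Int.sign_eq_one_of_pos h⟩

namespace LinearMap

variable {R L : Type*} [CommRing R] [LieRing L] [LieAlgebra R L]

def leibnizDefect (β : L →ₗ[R] L) : L →ₗ[R] L →ₗ[R] L :=
  LinearMap.mk₂ R (fun a b => β ⁅a, b⁆ - ⁅β a, b⁆ - ⁅a, β b⁆)
    (fun a a' b => by simp only [add_lie, map_add]; abel)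
    (fun t a b => by simp only [smul_lie, map_smul, smul_sub])
    (fun a b b' => by simp only [lie_add, map_add]; abel)
    (fun t a b => by simp only [lie_smul, map_smul, smul_sub])

variable (β : L →ₗ[R] L)

theorem leibnizDefect_apply (a b : L) :
    β.leibnizDefect a b = β ⁅a, b⁆ - ⁅β a, b⁆ - ⁅a, β b⁆ := rfl

theorem leibnizDefect_eq_zero_iff {a b : L} :
    β.leibnizDefect a b = 0 ↔ β ⁅a, b⁆ = ⁅β a, b⁆ + ⁅a, β b⁆ := by
  rw [leibnizDefect_apply, sub_sub, sub_eq_zero]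

theorem leibnizDefect_swap (a b : L) : β.leibnizDefect b a = -β.leibnizDefect a b := by
  simp only [leibnizDefect_apply]
  rw [← lie_skew a b, ← lie_skew a (β b), ← lie_skew (β a) b, map_neg]
  abel

theorem leibnizDefect_congr {β' : L →ₗ[R] L} {a b : L} (ha : β a = β' a) (hb : β b = β' b)
    (hab : β ⁅a, b⁆ = β' ⁅a, b⁆) : β.leibnizDefect a b = β'.leibnizDefect a b := by
  simp only [leibnizDefect_apply, ha, hb, hab]

theorem leibnizDefect_lie_add (a b y : L) :
    β.leibnizDefect ⁅a, b⁆ y + ⁅β.leibnizDefect a b, y⁆ =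
      β.leibnizDefect a ⁅b, y⁆ + β.leibnizDefect ⁅a, y⁆ b + ⁅a, β.leibnizDefect b y⁆ +
        ⁅β.leibnizDefect a y, b⁆ := by
  have jacobi (x u v : L) : ⁅⁅x, u⁆, v⁆ = ⁅x, ⁅u, v⁆⁆ + ⁅⁅x, v⁆, u⁆ := by
    rw [lie_lie, sub_eq_add_neg, lie_skew]
  simp only [leibnizDefect_apply, sub_lie, lie_sub]
  rw [jacobi a b y, jacobi a b (β y), jacobi (β a) b y, jacobi a (β b) y, map_add]
  abel

def leibnizKer : LieSubalgebra R L where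
  toSubmodule := LinearMap.ker β.leibnizDefect
  lie_mem' {a b} ha hb := by
    change β.leibnizDefect a = 0 at ha
    change β.leibnizDefect b = 0 at hb
    change β.leibnizDefect ⁅a, b⁆ = 0
    ext y
    have h := β.leibnizDefect_lie_add a b y
    rw [β.leibnizDefect_swap b ⁅a, y⁆] at h
    simpa [ha, hb] using h

theorem mem_leibnizKer {x : L} : x ∈ β.leibnizKer ↔ β.leibnizDefect x = 0 := Iff.rfl

end LinearMap

section

variable {R L : Type*} [CommRing R] [LieRing L] [LieAlgebra R L]

theorem exists_linearMap_lie_eq_of_span {Z : Submodule R L} {Y S : Set L} (f : L → L →ₗ[R] L)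
    (hZ : Z ≤ Submodule.span R S) (htrans : ∀ z ∈ Z, (∀ y ∈ Y, ⁅z, y⁆ = 0) → z = 0)
    (hS : ∀ s ∈ S, ∃ w ∈ Z, ∀ y ∈ Y, ⁅w, y⁆ = f y s) :
    ∃ γ : Z →ₗ[R] Z, ∀ z : Z, ∀ y ∈ Y, ⁅(γ z : L), y⁆ = f y z := by
  let G : Z →ₗ[R] (Y → L) :=
    LinearMap.pi fun y => (LieAlgebra.ad R L : L →ₗ[R] Module.End R L).flip y ∘ₗ Z.subtype
  let F : L →ₗ[R] (Y → L) := LinearMap.pi fun y => f y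
  have hG : Function.Injective G := by
    refine (injective_iff_map_eq_zero G).2 fun w hw => Subtype.ext ?_
    exact htrans w w.2 fun y hy => by simpa [G] using congr_fun hw ⟨y, hy⟩
  have hF : ∀ z : Z, F z ∈ LinearMap.range G := by
    suffices Z ≤ (LinearMap.range G).comap F from fun z => this z.2
    refine hZ.trans (Submodule.span_le.2 ?_)
    intro s hs
    obtain ⟨w, hw, h⟩ := hS s hs
    exact ⟨⟨w, hw⟩, funext fun y => by simpa [G, F] using h y y.2⟩
  refine ⟨(LinearEquiv.ofInjective G hG).symm ∘ₗ (F ∘ₗ Z.subtype).codRestrict _ hF,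
    fun z y hy => ?_⟩
  change ⁅(((LinearEquiv.ofInjective G hG).symm ⟨F z, hF z⟩ : Z) : L), y⁆ = f y z
  simpa [G, F] using congr_fun (LinearEquiv.ofInjective_symm_apply G (h := hG) ⟨F z, hF z⟩) ⟨y, hy⟩

end

namespace AssocGradedLieAlgebra

variable {k g V W L : Type*} [Field k] [LieRing g] [LieAlgebra k g]
  [AddCommGroup V] [Module k V] [AddCommGroup W] [Module k W] [LieRing L] [LieAlgebra k L]
  {P : PentadStruct k g V W} (A : AssocGradedLieAlgebra k g V W P L)

theorem lie_mem_of_add_eq {i j n : ℤ} (h : i + j = n) {x y : L} (hx : x ∈ A.grading i)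
    (hy : y ∈ A.grading j) : ⁅x, y⁆ ∈ A.grading n :=
  h ▸ A.lie_mem i j x hx y hy

theorem eq_zero_of_lie_eq_zero {n : ℤ} (hn : 2 ≤ n.natAbs) {x : L} (hx : x ∈ A.grading n)
    (h : ∀ y ∈ A.grading (-n.sign), ⁅x, y⁆ = 0) : x = 0 := by
  rcases Int.sign_cases n with ⟨hpos, hs⟩ | ⟨rfl, -⟩ | ⟨hneg, hs⟩
  · rw [hs] at h
    exact A.trans_pos n (by omega) x hx h
  · simp at hn
  · rw [hs, neg_neg] at h
    exact A.trans_neg (-n) (by omega) x (by rwa [neg_neg]) h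

theorem grading_eq_span {n : ℤ} (hn : 2 ≤ n.natAbs) :
    A.grading n = Submodule.span k
      {z | ∃ x ∈ A.grading n.sign, ∃ y ∈ A.grading (n - n.sign), z = ⁅x, y⁆} := by
  rcases Int.sign_cases n with ⟨hpos, hs⟩ | ⟨rfl, -⟩ | ⟨hneg, hs⟩
  · rw [hs, ← A.span_pos (n - 1) (by omega), sub_add_cancel]
  · simp at hn
  · rw [hs, show n - -1 = -(-n - 1) by ring, ← A.span_neg (-n - 1) (by omega)]
    congr 1
    ring

theorem eq_top_of_grading_le (K : LieSubalgebra k L)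
    (hK : ∀ n : ℤ, n.natAbs ≤ 1 → A.grading n ≤ K.toSubmodule) : K = ⊤ := by
  have hle (n : ℤ) : A.grading n ≤ K.toSubmodule := by
    induction hm : n.natAbs using Nat.strong_induction_on generalizing n with
    | _ m ih =>
      by_cases hn : n.natAbs ≤ 1
      · exact hK n hn
      have hs := Int.sign_cases n
      rw [A.grading_eq_span (by omega), Submodule.span_le]
      rintro _ ⟨x, hx, y, hy, rfl⟩
      exact K.lie_mem (hK _ (by omega) hx) (ih _ (by omega) _ rfl hy)
  rw [← LieSubalgebra.toSubmodule_eq_top, eq_top_iff, ← A.isInternal.submodule_iSup_eq_top]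
  exact iSup_le hle

theorem leibnizDefect_mem {β : L →ₗ[k] L} {i j n : ℤ} (hij : i + j = n) {a b : L}
    (ha : a ∈ A.grading i) (hb : b ∈ A.grading j) (hβa : β a ∈ A.grading i)
    (hβb : β b ∈ A.grading j) (hβab : β ⁅a, b⁆ ∈ A.grading n) :
    β.leibnizDefect a b ∈ A.grading n :=
  sub_mem (sub_mem hβab (A.lie_mem_of_add_eq hij hβa hb)) (A.lie_mem_of_add_eq hij ha hβb)

structure IsDerivationUpTo (β₀ β : L →ₗ[k] L) (N : ℕ) : Prop where
  eqOn_small : ∀ n : ℤ, n.natAbs ≤ 1 → ∀ x ∈ A.grading n, β x = β₀ x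
  mapsTo : ∀ n : ℤ, n.natAbs ≤ N → ∀ x ∈ A.grading n, β x ∈ A.grading n
  leibniz : ∀ i j : ℤ, i.natAbs ≤ 1 → j.natAbs ≤ N → (i + j).natAbs ≤ N →
    ∀ a ∈ A.grading i, ∀ b ∈ A.grading j, β.leibnizDefect a b = 0

namespace IsDerivationUpTo

variable {A} {β₀ β β' : L →ₗ[k] L} {N N' : ℕ}

theorem congr (h : A.IsDerivationUpTo β₀ β N) (hN : 1 ≤ N)
    (hβ' : ∀ n : ℤ, n.natAbs ≤ N → ∀ x ∈ A.grading n, β' x = β x) :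
    A.IsDerivationUpTo β₀ β' N where
  eqOn_small n hn x hx := (hβ' n (by omega) x hx).trans (h.eqOn_small n hn x hx)
  mapsTo n hn x hx := hβ' n hn x hx ▸ h.mapsTo n hn x hx
  leibniz i j hi hj hij a ha b hb := by
    rw [β'.leibnizDefect_congr (hβ' i (by omega) a ha) (hβ' j hj b hb)
      (hβ' _ hij _ (A.lie_mem _ _ _ ha _ hb))]
    exact h.leibniz i j hi hj hij a ha b hb

theorem eqOn (h : A.IsDerivationUpTo β₀ β N) (h' : A.IsDerivationUpTo β₀ β' N') (n : ℤ)
    (hN : n.natAbs ≤ N) (hN' : n.natAbs ≤ N') : ∀ x ∈ A.grading n, β x = β' x := by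
  induction hm : n.natAbs using Nat.strong_induction_on generalizing n with
  | _ m ih =>
    intro x hx
    by_cases hn : n.natAbs ≤ 1
    · rw [h.eqOn_small n hn x hx, h'.eqOn_small n hn x hx]
    have hs := Int.sign_cases n
    rw [← sub_eq_zero]
    refine A.eq_zero_of_lie_eq_zero (by omega)
      (sub_mem (h.mapsTo n hN x hx) (h'.mapsTo n hN' x hx)) fun y hy => ?_
    have hyx : ⁅y, x⁆ ∈ A.grading (-n.sign + n) := A.lie_mem _ _ _ hy _ hx
    have hβy : β y = β' y := by
      rw [h.eqOn_small _ (by omega) y hy, h'.eqOn_small _ (by omega) y hy]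
    have hβyx : β ⁅y, x⁆ = β' ⁅y, x⁆ :=
      ih _ (by omega) _ (by omega) (by omega) rfl _ hyx
    have e := β.leibnizDefect_eq_zero_iff.1 (h.leibniz _ n (by omega) hN (by omega) y hy x hx)
    have e' := β'.leibnizDefect_eq_zero_iff.1 (h'.leibniz _ n (by omega) hN' (by omega) y hy x hx)
    rw [hβyx, hβy, e'] at e
    rw [← lie_skew, lie_sub, add_left_cancel e, sub_self, neg_zero]

theorem leibnizDefect_lie_add_lie_eq_zero (h : A.IsDerivationUpTo β₀ β N) (hN : 1 ≤ N)
    {n : ℤ} (hn : n.natAbs = N + 1) {u x y : L} (hu : u ∈ A.grading n.sign)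
    (hx : x ∈ A.grading (n - n.sign)) (hy : y ∈ A.grading (-n.sign)) :
    β.leibnizDefect ⁅u, x⁆ y + ⁅β.leibnizDefect u x, y⁆ = 0 := by
  have hs := Int.sign_cases n
  rw [LinearMap.leibnizDefect_lie_add, β.leibnizDefect_swap y x,
    h.leibniz _ _ (by omega) (by omega) (by omega) u hu _ (A.lie_mem _ _ _ hx _ hy),
    h.leibniz _ _ (by omega) (by omega) (by omega) _ (A.lie_mem _ _ _ hu _ hy) x hx,
    h.leibniz _ _ (by omega) (by omega) (by omega) y hy x hx,
    h.leibniz _ _ (by omega) (by omega) (by omega) u hu y hy]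
  simp

theorem exists_lie_eq_on_grading (h : A.IsDerivationUpTo β₀ β N) (hN : 1 ≤ N) {n : ℤ}
    (hn : n.natAbs = N + 1) :
    ∃ γ : A.grading n →ₗ[k] A.grading n, ∀ z : A.grading n, ∀ y ∈ A.grading (-n.sign),
      ⁅(γ z : L), y⁆ = β ⁅(z : L), y⁆ - ⁅(z : L), β y⁆ := by
  have hs := Int.sign_cases n
  let ad : L →ₗ[k] L →ₗ[k] L := LieAlgebra.ad k L
  have hgen : ∀ z ∈ {z | ∃ u ∈ A.grading n.sign, ∃ x ∈ A.grading (n - n.sign), z = ⁅u, x⁆},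
      ∃ w ∈ A.grading n, ∀ y ∈ A.grading (-n.sign), ⁅w, y⁆ = β ⁅z, y⁆ - ⁅z, β y⁆ := by
    rintro _ ⟨u, hu, x, hx, rfl⟩
    refine ⟨⁅β u, x⁆ + ⁅u, β x⁆,
      add_mem (A.lie_mem_of_add_eq (by ring) (h.mapsTo n.sign (by omega) u hu) hx)
        (A.lie_mem_of_add_eq (by ring) hu (h.mapsTo (n - n.sign) (by omega) x hx)),
      fun y hy => ?_⟩
    have key := h.leibnizDefect_lie_add_lie_eq_zero hN hn hu hx hy
    rw [eq_comm, ← sub_eq_zero, ← key]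
    simp only [LinearMap.leibnizDefect_apply, sub_lie, add_lie]
    abel
  obtain ⟨γ, hγ⟩ := exists_linearMap_lie_eq_of_span (fun y => β ∘ₗ ad.flip y - ad.flip (β y))
    (A.grading_eq_span (n := n) (by omega)).le
    (fun z hz => A.eq_zero_of_lie_eq_zero (by omega) hz) (by simpa [ad] using hgen)
  exact ⟨γ, fun z y hy => by simpa [ad] using hγ z y hy⟩

theorem succ (h : A.IsDerivationUpTo β₀ β N) (hN : 1 ≤ N)
    (hmaps : ∀ n : ℤ, n.natAbs = N + 1 → ∀ z ∈ A.grading n, β z ∈ A.grading n)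
    (htop : ∀ n : ℤ, n.natAbs = N + 1 → ∀ z ∈ A.grading n, ∀ y ∈ A.grading (-n.sign),
      β.leibnizDefect z y = 0) :
    A.IsDerivationUpTo β₀ β (N + 1) := by
  have mapsTo : ∀ n : ℤ, n.natAbs ≤ N + 1 → ∀ x ∈ A.grading n, β x ∈ A.grading n := by
    intro n hn
    rcases Nat.lt_or_eq_of_le hn with hlt | heq
    exacts [h.mapsTo n (by omega), hmaps n heq]
  have top_of_lie : ∀ {i j n : ℤ}, i + j = n → n.natAbs = N + 1 → i.natAbs ≤ 1 →
      j.natAbs ≤ N + 1 → ∀ a ∈ A.grading i, ∀ b ∈ A.grading j,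
      (∀ y ∈ A.grading (-n.sign), β.leibnizDefect ⁅a, b⁆ y + ⁅β.leibnizDefect a b, y⁆ = 0) →
      β.leibnizDefect a b = 0 := by
    intro i j n hij hn hi hj a ha b hb hcocycle
    have hab := A.lie_mem_of_add_eq hij ha hb
    refine A.eq_zero_of_lie_eq_zero (by omega) (A.leibnizDefect_mem hij ha hb
      (mapsTo i (by omega) a ha) (mapsTo j hj b hb) (mapsTo n hn.le _ hab)) fun y hy => ?_
    simpa [htop n hn _ hab y hy] using hcocycle y hy
  refine ⟨h.eqOn_small, mapsTo, fun i j hi hj hij a ha b hb => ?_⟩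
  by_cases hold : j.natAbs ≤ N ∧ (i + j).natAbs ≤ N
  · exact h.leibniz i j hi hold.1 hold.2 a ha b hb
  have hs := Int.sign_cases j
  have hs' := Int.sign_cases (i + j)
  by_cases hjN : j.natAbs = N + 1
  · by_cases hi0 : i = 0
    · subst hi0
      refine top_of_lie (zero_add j) hjN (by omega) hj a ha b hb fun y hy => ?_
      rw [LinearMap.leibnizDefect_lie_add, β.leibnizDefect_swap b,
        htop j hjN b hb _ (A.lie_mem_of_add_eq (zero_add _) ha hy), htop j hjN b hb y hy,
        h.leibniz 0 _ (by omega) (by omega) (by omega) a ha _ (A.lie_mem _ _ _ hb _ hy),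
        h.leibniz 0 _ (by omega) (by omega) (by omega) a ha y hy]
      simp
    · obtain rfl : i = -j.sign := by omega
      rw [β.leibnizDefect_swap b a, htop j hjN b hb a ha, neg_zero]
  · have hi' : i = (i + j).sign := by omega
    have hj' : j = i + j - (i + j).sign := by omega
    exact top_of_lie rfl (by omega) hi hj a ha b hb fun y hy =>
      h.leibnizDefect_lie_add_lie_eq_zero hN (by omega) (by rwa [← hi']) (by rwa [← hj']) hy

theorem exists_succ (h : A.IsDerivationUpTo β₀ β N) (hN : 1 ≤ N) :
    ∃ β' : L →ₗ[k] L, A.IsDerivationUpTo β₀ β' (N + 1) := by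
  obtain ⟨γp, hγp⟩ := h.exists_lie_eq_on_grading hN (n := N + 1) (by omega)
  obtain ⟨γm, hγm⟩ := h.exists_lie_eq_on_grading hN (n := -(N + 1)) (by omega)
  obtain ⟨β₁, hβ₁, hβ₁β⟩ := A.isInternal.exists_update β _ ((A.grading _).subtype ∘ₗ γp)
  obtain ⟨β', hβ', hβ'β₁⟩ := A.isInternal.exists_update β₁ _ ((A.grading _).subtype ∘ₗ γm)
  have hold : ∀ n : ℤ, n.natAbs ≤ N → ∀ x ∈ A.grading n, β' x = β x := fun n hn x hx =>
    (hβ'β₁ n (by omega) x hx).trans (hβ₁β n (by omega) x hx)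
  have htop : ∀ n : ℤ, n.natAbs = N + 1 → ∃ γ : A.grading n →ₗ[k] A.grading n,
      (∀ z : A.grading n, β' z = γ z) ∧ ∀ z : A.grading n, ∀ y ∈ A.grading (-n.sign),
        ⁅(γ z : L), y⁆ = β ⁅(z : L), y⁆ - ⁅(z : L), β y⁆ := by
    intro n hn
    obtain rfl | rfl : n = N + 1 ∨ n = -(N + 1) := by omega
    · exact ⟨γp, fun z => (hβ'β₁ _ (by omega) z z.2).trans (hβ₁ z), hγp⟩
    · exact ⟨γm, hβ', hγm⟩
  refine ⟨β', (h.congr hN hold).succ hN (fun n hn z hz => ?_) (fun n hn z hz y hy => ?_)⟩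
  · obtain ⟨γ, hβ'γ, -⟩ := htop n hn
    exact hβ'γ ⟨z, hz⟩ ▸ (γ ⟨z, hz⟩).2
  · obtain ⟨γ, hβ'γ, hγ⟩ := htop n hn
    have hs := Int.sign_cases n
    rw [LinearMap.leibnizDefect_apply, hβ'γ ⟨z, hz⟩, hγ ⟨z, hz⟩ y hy,
      hold _ (by omega) _ (A.lie_mem _ _ _ hz _ hy), hold _ (by omega) y hy]
    abel

end IsDerivationUpTo

theorem leibnizKer_eq_top {α : L →ₗ[k] L} (h : ∀ i j : ℤ, i.natAbs ≤ 1 →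
    ∀ a ∈ A.grading i, ∀ b ∈ A.grading j, α.leibnizDefect a b = 0) :
    α.leibnizKer = ⊤ := by
  refine A.eq_top_of_grading_le _ fun i hi a ha => ?_
  rw [LieSubalgebra.mem_toSubmodule, LinearMap.mem_leibnizKer, ← LinearMap.ker_eq_top,
    eq_top_iff, ← A.isInternal.submodule_iSup_eq_top]
  exact iSup_le fun j b hb => h i j hi a ha b hb

theorem exists_derivation {β₀ : L →ₗ[k] L} (h : A.IsDerivationUpTo β₀ β₀ 1) :
    ∃ α : L →ₗ[k] L, (∀ x y : L, α ⁅x, y⁆ = ⁅α x, y⁆ + ⁅x, α y⁆) ∧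
      ∀ n : ℤ, n.natAbs ≤ 1 → ∀ x ∈ A.grading n, α x = β₀ x := by
  have hβ : ∀ N : ℕ, ∃ β, A.IsDerivationUpTo β₀ β (N + 1) := by
    intro N
    induction N with
    | zero => exact ⟨β₀, h⟩
    | succ N ih =>
      obtain ⟨β, hβ⟩ := ih
      exact hβ.exists_succ (by omega)
  choose β hβ using hβ
  obtain ⟨α, hα⟩ := A.isInternal.exists_comp_subtype_eq fun n =>
    β n.natAbs ∘ₗ (A.grading n).subtype
  have hαβ : ∀ (N : ℕ) (n : ℤ), n.natAbs ≤ N + 1 → ∀ x ∈ A.grading n, α x = β N x :=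
    fun N n hn x hx =>
      (LinearMap.congr_fun (hα n) ⟨x, hx⟩).trans ((hβ _).eqOn (hβ N) n (by omega) hn x hx)
  have hker : α.leibnizKer = ⊤ := A.leibnizKer_eq_top fun i j hi a ha b hb => by
    have hab := A.lie_mem _ _ _ ha _ hb
    rw [α.leibnizDefect_congr (hαβ j.natAbs i (by omega) a ha) (hαβ _ j (by omega) b hb)
      (hαβ _ _ (by omega) _ hab)]
    exact (hβ _).leibniz i j hi (by omega) (by omega) a ha b hb
  refine ⟨α, fun x y => ?_, fun n hn x hx =>
    (hαβ 0 n (by omega) x hx).trans ((hβ 0).eqOn_small n hn x hx)⟩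
  have hx : x ∈ α.leibnizKer := hker ▸ LieSubalgebra.mem_top x
  exact α.leibnizDefect_eq_zero_iff.1 (LinearMap.congr_fun (α.mem_leibnizKer.1 hx) y)

theorem exists_linearMap_extend (α₀ : A.grading 0 →ₗ[k] A.grading 0)
    (α₁ : A.grading 1 →ₗ[k] A.grading 1) (αm : A.grading (-1) →ₗ[k] A.grading (-1)) :
    ∃ β₀ : L →ₗ[k] L, (∀ a : A.grading 0, β₀ a = α₀ a) ∧ (∀ a : A.grading 1, β₀ a = α₁ a) ∧
      ∀ a : A.grading (-1), β₀ a = αm a := by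
  obtain ⟨β₁, h₁, -⟩ := A.isInternal.exists_update 0 0 ((A.grading 0).subtype ∘ₗ α₀)
  obtain ⟨β₂, h₂, h₂₁⟩ := A.isInternal.exists_update β₁ 1 ((A.grading 1).subtype ∘ₗ α₁)
  obtain ⟨β₃, h₃, h₃₂⟩ := A.isInternal.exists_update β₂ (-1) ((A.grading (-1)).subtype ∘ₗ αm)
  refine ⟨β₃, fun a => ?_, fun a => ?_, h₃⟩
  · rw [h₃₂ 0 (by norm_num) a a.2, h₂₁ 0 (by norm_num) a a.2, h₁ a]
    rfl
  · rw [h₃₂ 1 (by norm_num) a a.2, h₂ a]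
    rfl

theorem leibnizDefect_eq_zero_of_compat {β : L →ₗ[k] L} {i j l : ℤ} (hl : i + j = l)
    {fi : A.grading i →ₗ[k] A.grading i} {fj : A.grading j →ₗ[k] A.grading j}
    {fl : A.grading l →ₗ[k] A.grading l} (hi : ∀ a : A.grading i, β a = fi a)
    (hj : ∀ b : A.grading j, β b = fj b) (hl' : ∀ c : A.grading l, β c = fl c)
    (h : ∀ (a : A.grading i) (b : A.grading j) (h : ⁅(a : L), (b : L)⁆ ∈ A.grading l),
      (fl ⟨⁅(a : L), (b : L)⁆, h⟩ : L) = ⁅(fi a : L), (b : L)⁆ + ⁅(a : L), (fj b : L)⁆) :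
    ∀ a ∈ A.grading i, ∀ b ∈ A.grading j, β.leibnizDefect a b = 0 := by
  intro a ha b hb
  have hab := A.lie_mem_of_add_eq hl ha hb
  rw [β.leibnizDefect_eq_zero_iff, hl' ⟨_, hab⟩, hi ⟨a, ha⟩, hj ⟨b, hb⟩]
  exact h ⟨a, ha⟩ ⟨b, hb⟩ hab

end AssocGradedLieAlgebra

/-- Let `L = ⊕ₙ Vₙ` be the graded Lie algebra associated with a standard
pentad, and let `αᵢ : Vᵢ → Vᵢ` for `i = 0, ±1` be linear maps satisfying
`α_{i+j}([aᵢ, bⱼ]) = [αᵢ(aᵢ), bⱼ] + [aᵢ, αⱼ(bⱼ)]` for all `-1 ≤ i, j, i+j ≤ 1`.  Then there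
exists a derivation `α` of `L` whose restriction to `Vᵢ` equals `αᵢ` for `i = 0, ±1`. -/
theorem statement13
    {k g V W L : Type*} [Field k] [LieRing g] [LieAlgebra k g]
    [AddCommGroup V] [Module k V] [AddCommGroup W] [Module k W]
    [LieRing L] [LieAlgebra k L]
    (P : PentadStruct k g V W)
    (A : AssocGradedLieAlgebra k g V W P L)
    (α₀ : ↥(A.grading 0) →ₗ[k] ↥(A.grading 0))
    (α₁ : ↥(A.grading 1) →ₗ[k] ↥(A.grading 1))
    (αm : ↥(A.grading (-1)) →ₗ[k] ↥(A.grading (-1)))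
    -- compatibility for `(i, j) = (0, 0)`:
    (h00 : ∀ (a b : A.grading 0) (h : ⁅(a : L), (b : L)⁆ ∈ A.grading 0),
      (α₀ ⟨⁅(a : L), (b : L)⁆, h⟩ : L) = ⁅(α₀ a : L), (b : L)⁆ + ⁅(a : L), (α₀ b : L)⁆)
    -- `(i, j) = (0, 1)`:
    (h01 : ∀ (a : A.grading 0) (b : A.grading 1) (h : ⁅(a : L), (b : L)⁆ ∈ A.grading 1),
      (α₁ ⟨⁅(a : L), (b : L)⁆, h⟩ : L) = ⁅(α₀ a : L), (b : L)⁆ + ⁅(a : L), (α₁ b : L)⁆)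
    -- `(i, j) = (1, 0)`:
    (h10 : ∀ (a : A.grading 1) (b : A.grading 0) (h : ⁅(a : L), (b : L)⁆ ∈ A.grading 1),
      (α₁ ⟨⁅(a : L), (b : L)⁆, h⟩ : L) = ⁅(α₁ a : L), (b : L)⁆ + ⁅(a : L), (α₀ b : L)⁆)
    -- `(i, j) = (0, -1)`:
    (h0m : ∀ (a : A.grading 0) (b : A.grading (-1)) (h : ⁅(a : L), (b : L)⁆ ∈ A.grading (-1)),
      (αm ⟨⁅(a : L), (b : L)⁆, h⟩ : L) = ⁅(α₀ a : L), (b : L)⁆ + ⁅(a : L), (αm b : L)⁆)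
    -- `(i, j) = (-1, 0)`:
    (hm0 : ∀ (a : A.grading (-1)) (b : A.grading 0) (h : ⁅(a : L), (b : L)⁆ ∈ A.grading (-1)),
      (αm ⟨⁅(a : L), (b : L)⁆, h⟩ : L) = ⁅(αm a : L), (b : L)⁆ + ⁅(a : L), (α₀ b : L)⁆)
    -- `(i, j) = (1, -1)`:
    (h1m : ∀ (a : A.grading 1) (b : A.grading (-1)) (h : ⁅(a : L), (b : L)⁆ ∈ A.grading 0),
      (α₀ ⟨⁅(a : L), (b : L)⁆, h⟩ : L) = ⁅(α₁ a : L), (b : L)⁆ + ⁅(a : L), (αm b : L)⁆)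
    -- `(i, j) = (-1, 1)`:
    (hm1 : ∀ (a : A.grading (-1)) (b : A.grading 1) (h : ⁅(a : L), (b : L)⁆ ∈ A.grading 0),
      (α₀ ⟨⁅(a : L), (b : L)⁆, h⟩ : L) = ⁅(αm a : L), (b : L)⁆ + ⁅(a : L), (α₁ b : L)⁆) :
    ∃ α : L →ₗ[k] L,
      (∀ x y : L, α ⁅x, y⁆ = ⁅α x, y⁆ + ⁅x, α y⁆)
      ∧ (∀ a : A.grading 0, α a = α₀ a)
      ∧ (∀ a : A.grading 1, α a = α₁ a)
      ∧ (∀ a : A.grading (-1), α a = αm a) := by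
  obtain ⟨β₀, h0, h1, hm⟩ := A.exists_linearMap_extend α₀ α₁ αm
  have hmaps : ∀ n : ℤ, n.natAbs ≤ 1 → ∀ x ∈ A.grading n, β₀ x ∈ A.grading n := by
    intro n hn x hx
    obtain rfl | rfl | rfl : n = 0 ∨ n = 1 ∨ n = -1 := by omega
    exacts [h0 ⟨x, hx⟩ ▸ (α₀ _).2, h1 ⟨x, hx⟩ ▸ (α₁ _).2, hm ⟨x, hx⟩ ▸ (αm _).2]
  have hleibniz : ∀ i j : ℤ, i.natAbs ≤ 1 → j.natAbs ≤ 1 → (i + j).natAbs ≤ 1 →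
      ∀ a ∈ A.grading i, ∀ b ∈ A.grading j, β₀.leibnizDefect a b = 0 := by
    intro i j hi hj hij
    obtain ⟨rfl, rfl⟩ | ⟨rfl, rfl⟩ | ⟨rfl, rfl⟩ | ⟨rfl, rfl⟩ | ⟨rfl, rfl⟩ | ⟨rfl, rfl⟩ |
      ⟨rfl, rfl⟩ : i = 0 ∧ j = 0 ∨ i = 0 ∧ j = 1 ∨ i = 1 ∧ j = 0 ∨ i = 0 ∧ j = -1 ∨
        i = -1 ∧ j = 0 ∨ i = 1 ∧ j = -1 ∨ i = -1 ∧ j = 1 := by omega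
    exacts [A.leibnizDefect_eq_zero_of_compat (by norm_num) h0 h0 h0 h00,
      A.leibnizDefect_eq_zero_of_compat (by norm_num) h0 h1 h1 h01,
      A.leibnizDefect_eq_zero_of_compat (by norm_num) h1 h0 h1 h10,
      A.leibnizDefect_eq_zero_of_compat (by norm_num) h0 hm hm h0m,
      A.leibnizDefect_eq_zero_of_compat (by norm_num) hm h0 hm hm0,
      A.leibnizDefect_eq_zero_of_compat (by norm_num) h1 hm h0 h1m,
      A.leibnizDefect_eq_zero_of_compat (by norm_num) hm h1 h0 hm1]
  obtain ⟨α, hder, hα⟩ := A.exists_derivation ⟨fun _ _ _ _ => rfl, hmaps, hleibniz⟩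
  exact ⟨α, hder, fun a => (hα 0 (by norm_num) a a.2).trans (h0 a),
    fun a => (hα 1 (by norm_num) a a.2).trans (h1 a),
    fun a => (hα (-1) (by norm_num) a a.2).trans (hm a)⟩
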